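/- arXiv:2404.10913 — 2 statements merged into one kernel-verified Lean document; each statement's English description precedes it below -/
import Mathlib

section
/- Let φ be a Boolean function on n variables and ψ a Boolean function on m variables. Define ρ on n + m + 2 variables (variables x_1,…,x_n, y_1,…,y_m, z, z') by ρ = (φ(x) ∧ z) ∨ (x_1 ∧ ⋯ ∧ x_n ∧ ψ(y) ∧ ¬z ∧ z'). Then the number of satisfying assignments of ρ equals #sat(φ) · 2^(m+1) + #sat(ψ). -/
open Finset

theorem card_filter_prod_switch {α β : Type*} [Fintype α] [Fintype β] [DecidableEq α]
    [DecidableEq β] (φ : α → Bool) (ψ : β → Bool) (a : α) :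
    #{w : α × β × Bool × Bool | ((φ w.1 && w.2.2.1) ||
        (decide (w.1 = a) && ψ w.2.1 && !w.2.2.1 && w.2.2.2)) = true} =
      #{x | φ x = true} * Fintype.card β * 2 + #{y | ψ y = true} := by
  set A : Finset α := {x | φ x = true}
  set B : Finset β := {y | ψ y = true}
  have hsplit : ({w : α × β × Bool × Bool | ((φ w.1 && w.2.2.1) ||
        (decide (w.1 = a) && ψ w.2.1 && !w.2.2.1 && w.2.2.2)) = true} : Finset _) =
      A ×ˢ univ ×ˢ {true} ×ˢ univ ∪ {a} ×ˢ B ×ˢ {false} ×ˢ {true} := by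
    ext ⟨x, y, z, z'⟩
    cases z <;> cases z' <;> simp [A, B, eq_comm (a := x), and_comm]
  have hdisj : Disjoint (A ×ˢ (univ : Finset β) ×ˢ {true} ×ˢ (univ : Finset Bool))
      ({a} ×ˢ B ×ˢ {false} ×ˢ {true}) := by
    simp only [disjoint_product]
    simp
  rw [hsplit, card_union_of_disjoint hdisj]
  simp [card_product, mul_assoc]

theorem stmt_1 (n m : ℕ) (φ : (Fin n → Bool) → Bool) (ψ : (Fin m → Bool) → Bool)
    (ρ : (Fin n → Bool) × (Fin m → Bool) × Bool × Bool → Bool)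
    (hρ : ∀ x y z z', ρ (x, y, z, z') =
      ((φ x && z) || (decide (∀ i, x i = true) && ψ y && !z && z'))) :
    (Finset.univ.filter (fun w : (Fin n → Bool) × (Fin m → Bool) × Bool × Bool =>
        ρ w = true)).card =
      (Finset.univ.filter (fun v : Fin n → Bool => φ v = true)).card * 2 ^ (m + 1) +
        (Finset.univ.filter (fun v : Fin m → Bool => ψ v = true)).card := by
  have hρ' : ∀ w, ρ w = ((φ w.1 && w.2.2.1) ||
      (decide (w.1 = fun _ => true) && ψ w.2.1 && !w.2.2.1 && w.2.2.2)) := by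
    rintro ⟨x, y, z, z'⟩
    simp only [hρ, funext_iff]
  simp only [hρ', card_filter_prod_switch, Fintype.card_fun, Fintype.card_bool,
    Fintype.card_fin, pow_succ, mul_assoc]
end

section
/- Let n ≥ 1 and a_0, a_1, …, a_n ∈ {0,1} be the binary digits of k = Σ_{i=0}^{n} 2^{n-i} · a_i, with k ≤ 2^n. Define the Boolean function ψ on variables x_1,…,x_n by ψ = ¬l(a_0) → (x_1 ⋄_{a_1} (x_2 ⋄_{a_2} ⋯ (x_{n-1} ⋄_{a_{n-1}} (x_n ∧ l(a_n)))⋯)), where ⋄_0 = ∧, ⋄_1 = ∨, l(0) = False, l(1) = True. Then the number of satisfying assignments of ψ equals k. -/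
/-!
Reading the digits from the most significant one, `innerForm (n + 1) a` has exactly
`∑ 2 ^ (n - i) a_i` models: when `a_0 = 1` the outer connective is `∨`, so the `2 ^ n` assignments
with `x_1` true are all models, and otherwise only those with `x_1` true and a model of the tail
survive; in both cases the tail contributes the lower digits. The leading `¬ l(a_0) →` either makes
`ψ` valid, and then `k ≤ 2 ^ n` forces `k = 2 ^ n`, or leaves the count of the inner formula.
-/

open Finset

/-- The nested formula `x_1 ⋄_{a_1} (x_2 ⋄_{a_2} ⋯ (x_n ∧ l(a_n))⋯)`,
where `⋄_0 = ∧`, `⋄_1 = ∨` and `l(0) = False`, `l(1) = True`. -/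
def innerForm : (n : ℕ) → (Fin n → Bool) → (Fin n → Bool) → Bool
  | 0, _, _ => true
  | 1, a, x => x 0 && a 0
  | (n + 2), a, x =>
      if a 0 then x 0 || innerForm (n + 1) (fun i => a i.succ) (fun i => x i.succ)
      else x 0 && innerForm (n + 1) (fun i => a i.succ) (fun i => x i.succ)

lemma card_filter_fin_succ {α : Type*} [Fintype α] (n : ℕ)
    (p : α → (Fin n → α) → Bool) :
    #{x : Fin (n + 1) → α | p (x 0) (fun i => x i.succ) = true} = ∑ b, #{y | p b y = true} := by
  simp only [card_filter]
  rw [← (Fin.consEquiv fun _ => α).sum_comp, Fintype.sum_prod_type]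
  simp [Fin.consEquiv]

lemma sum_two_pow_mul_toNat_fin_succ (n : ℕ) (a : Fin (n + 2) → Bool) :
    ∑ i : Fin (n + 2), 2 ^ (n + 1 - i) * (a i).toNat
      = 2 ^ (n + 1) * (a 0).toNat + ∑ i : Fin (n + 1), 2 ^ (n - i) * (a i.succ).toNat := by
  simp [Fin.sum_univ_succ]

lemma card_filter_innerForm (n : ℕ) (a : Fin (n + 1) → Bool) :
    #{x | innerForm (n + 1) a x = true} = ∑ i : Fin (n + 1), 2 ^ (n - i) * (a i).toNat := by
  induction n with
  | zero =>
    cases h : a 0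
    · simp [innerForm, h]
    · have : #{x : Fin 1 → Bool | x 0 = true} = 1 := by decide
      simpa [innerForm, h] using this
  | succ m ih =>
    rw [sum_two_pow_mul_toNat_fin_succ, ← ih]
    cases h : a 0
    · simpa [innerForm, h] using
        card_filter_fin_succ (m + 1) fun b y => b && innerForm (m + 1) (fun i => a i.succ) y
    · simpa [innerForm, h, add_comm] using
        card_filter_fin_succ (m + 1) fun b y => b || innerForm (m + 1) (fun i => a i.succ) y

theorem stmt_3 (n : ℕ) (hn : 1 ≤ n) (a : Fin (n + 1) → Bool)
    (k : ℕ) (hk : k = ∑ i : Fin (n + 1), 2 ^ (n - (i : ℕ)) * (a i).toNat)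
    (hk' : k ≤ 2 ^ n) :
    (Finset.univ.filter (fun x : Fin n → Bool =>
        (a 0 || innerForm n (fun i => a i.succ) x) = true)).card = k := by
  obtain ⟨m, rfl⟩ : ∃ m, n = m + 1 := ⟨n - 1, by omega⟩
  rw [sum_two_pow_mul_toNat_fin_succ] at hk
  cases h : a 0
  · simpa [h, hk] using card_filter_innerForm m fun i => a i.succ
  · simp only [Bool.true_or, filter_true, card_univ, Fintype.card_fun, Fintype.card_bool,
      Fintype.card_fin]
    simp only [h, Bool.toNat_true] at hk
    omega
end
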